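/- The matrices G_j preserve the Hermitian form H̃: G_j^† H̃ G_j = H̃ for all 1 ≤ j ≤ n. -/

import Mathlib

open Matrix

namespace KLM

variable {k : Type*} [Field k]

/-- Assemble an `Nn × Nn` matrix from an `n × n` array of `N × N` blocks,
blocks being indexed by natural numbers (only indices `< n` are relevant). -/
def blk (n N : ℕ) (B : ℕ → ℕ → Matrix (Fin N) (Fin N) k) :
    Matrix (Fin n × Fin N) (Fin n × Fin N) k :=
  Matrix.of fun p q => B p.1.1 q.1.1 p.2 q.2

/-- The Dettweiler–Reiter convolution matrix `G_j = ρ^{DR}_λ(x_j)` (0-based index `j`):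
the identity except that the `j`-th block row is
`(λ(g_0−1), …, λ(g_{j−1}−1), λ g_j, g_{j+1}−1, …, g_{n−1}−1)`. -/
def G (n N : ℕ) (g : ℕ → Matrix (Fin N) (Fin N) k) (lam : k) (j : ℕ) :
    Matrix (Fin n × Fin N) (Fin n × Fin N) k :=
  blk n N fun r c =>
    if r = j then
      (if c < j then lam • (g c - 1) else if c = j then lam • g j else g c - 1)
    else if r = c then 1 else 0

/-- The Long–Moody matrix `S_i = ρ^{LM}(σ_i)` (0-based index `i`):
`(s_i ⊕ ⋯ ⊕ s_i) · diag(1, …, 1, R_i, 1, …, 1)` where `R_i` is the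
`2×2` block matrix with rows `(0, g_i)` and `(1, 1 − g_{i+1})`
placed in block rows/columns `i, i+1`. -/
def S (n N : ℕ) (g s : ℕ → Matrix (Fin N) (Fin N) k) (i : ℕ) :
    Matrix (Fin n × Fin N) (Fin n × Fin N) k :=
  blk n N fun r c =>
    if r = i ∧ c = i then 0
    else if r = i ∧ c = i + 1 then s i * g i
    else if r = i + 1 ∧ c = i then s i
    else if r = i + 1 ∧ c = i + 1 then s i * (1 - g (i + 1))
    else if r = c then s i
    else 0

/-- The Hermitian matrix `H̃` of the monodromy-invariant form: its `(j,c)` block is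
`μ⁻¹ H (g_j⁻¹ − 1)(g_c − 1)` for `j < c`, `μ⁻¹ H (g_j⁻¹ − λ)(g_j − 1)` for `j = c`
(with `λ = μ²`), and `μ H (g_j⁻¹ − 1)(g_c − 1)` for `j > c`. -/
noncomputable def Ht (n N : ℕ) (g : ℕ → Matrix (Fin N) (Fin N) ℂ) (H : Matrix (Fin N) (Fin N) ℂ)
    (mu : ℂ) : Matrix (Fin n × Fin N) (Fin n × Fin N) ℂ :=
  blk n N fun j c =>
    if j < c then mu⁻¹ • (H * ((g j)⁻¹ - 1) * (g c - 1))
    else if j = c then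
      mu⁻¹ • (H * ((g j)⁻¹ - mu ^ 2 • (1 : Matrix (Fin N) (Fin N) ℂ)) * (g j - 1))
    else mu • (H * ((g j)⁻¹ - 1) * (g c - 1))

lemma blk_mul {n N : ℕ} (B C : ℕ → ℕ → Matrix (Fin N) (Fin N) k) :
    blk n N B * blk n N C = blk n N (fun p q => ∑ r : Fin n, B p r * C r q) := by
  ext ⟨a, x⟩ ⟨b, y⟩
  simp [blk, Matrix.mul_apply, Fintype.sum_prod_type, Matrix.sum_apply]

lemma blk_conjTranspose {n N : ℕ} [StarRing k] (B : ℕ → ℕ → Matrix (Fin N) (Fin N) k) :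
    (blk n N B)ᴴ = blk n N (fun p q => (B q p)ᴴ) := by
  ext ⟨a, x⟩ ⟨b, y⟩
  simp [blk, Matrix.conjTranspose_apply]

lemma blk_congr {n N : ℕ} {B C : ℕ → ℕ → Matrix (Fin N) (Fin N) k}
    (h : ∀ p q : Fin n, B p q = C p q) : blk n N B = blk n N C := by
  ext ⟨a, x⟩ ⟨b, y⟩
  rw [blk, blk, Matrix.of_apply, Matrix.of_apply, h a b]

lemma sum_ite_two {M : Type*} [AddCommMonoid M] {n : ℕ} (jF p : Fin n)
    (X Y : Fin n → M) :
    ∑ r : Fin n, (if r = jF then X r else if r = p then Y r else 0)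
      = X jF + if p = jF then 0 else Y p := by
  rcases eq_or_ne p jF with h | h
  · subst h
    have : ∀ r : Fin n, (if r = p then X r else if r = p then Y r else 0)
        = (if r = p then X r else 0) := by
      intro r; rcases eq_or_ne r p with hr | hr <;> simp [hr]
    rw [Finset.sum_congr rfl fun r _ => this r, Finset.sum_ite_eq' Finset.univ p X]
    simp
  · have hsplit : ∀ r : Fin n, (if r = jF then X r else if r = p then Y r else 0)
        = (if r = jF then X r else 0) + (if r = p then Y r else 0) := by
      intro r
      rcases eq_or_ne r jF with hr | hr
      · subst hr; simp [Ne.symm h]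
      · simp [hr]
    rw [Finset.sum_congr rfl fun r _ => hsplit r, Finset.sum_add_distrib,
      Finset.sum_ite_eq' Finset.univ jF X, Finset.sum_ite_eq' Finset.univ p Y]
    simp [h]

lemma sum_ite_two' {M : Type*} [AddCommMonoid M] {n j : ℕ} (hj : j < n) (p : Fin n)
    (X Y : Fin n → M) :
    ∑ r : Fin n, (if (r : ℕ) = j then X r else if (r : ℕ) = (p : ℕ) then Y r else 0)
      = X ⟨j, hj⟩ + if (p : ℕ) = j then 0 else Y p := by
  have h1 : ∀ r : Fin n, ((r : ℕ) = j) = (r = ⟨j, hj⟩) := by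
    intro r; simp [Fin.ext_iff]
  have h2 : ∀ r : Fin n, ((r : ℕ) = (p : ℕ)) = (r = p) := by
    intro r; simp [Fin.ext_iff]
  simp only [h1, h2]
  rw [sum_ite_two ⟨j, hj⟩ p X Y]


set_option maxHeartbeats 2000000 in
/-- The matrices `G_j` (with `λ = μ²`) preserve the Hermitian form `H̃`:
`G_jᴴ H̃ G_j = H̃`. -/
theorem G_preserves_Ht
    (N n : ℕ) (hN : 1 ≤ N) (hn : 2 ≤ n)
    (g : ℕ → Matrix (Fin N) (Fin N) ℂ)
    (hgu : ∀ j, j < n → IsUnit (g j))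
    (mu : ℂ) (hmu : ‖mu‖ = 1)
    (H : Matrix (Fin N) (Fin N) ℂ) (hH : Hᴴ = H)
    (hunit : ∀ j, j < n → (g j)ᴴ * H * g j = H) :
    ∀ j, j < n →
      (G n N g (mu ^ 2) j)ᴴ * Ht n N g H mu * G n N g (mu ^ 2) j =
        Ht n N g H mu := by
  intro j hj
  have hmu0 : mu ≠ 0 := by
    intro h; rw [h] at hmu; simp at hmu
  have hconj : (starRingEnd ℂ) mu = mu⁻¹ := by
    rw [Complex.inv_eq_conj]; exact hmu
  have key : ∀ i, i < n → (g i)ᴴ * H = H * (g i)⁻¹ := by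
    intro i hi
    have hdet : IsUnit (g i).det := (Matrix.isUnit_iff_isUnit_det _).mp (hgu i hi)
    have h1 : g i * (g i)⁻¹ = 1 := Matrix.mul_nonsing_inv _ hdet
    calc (g i)ᴴ * H = (g i)ᴴ * H * (g i * (g i)⁻¹) := by rw [h1, mul_one]
      _ = ((g i)ᴴ * H * g i) * (g i)⁻¹ := by rw [mul_assoc, mul_assoc, mul_assoc]
      _ = H * (g i)⁻¹ := by rw [hunit i hi]
  rw [G, Ht, blk_conjTranspose, blk_mul, blk_mul]
  apply blk_congr
  intro p q
  simp only [apply_ite conjTranspose, conjTranspose_one, conjTranspose_zero,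
    ite_mul, one_mul, zero_mul]
  simp only [sum_ite_two' hj, mul_ite, mul_one, mul_zero]
  have hdet : IsUnit (g j).det := (Matrix.isUnit_iff_isUnit_det _).mp (hgu j hj)
  have hb1 : g j * (g j)⁻¹ = 1 := Matrix.mul_nonsing_inv _ hdet
  have hb2 : (g j)⁻¹ * g j = 1 := Matrix.nonsing_inv_mul _ hdet
  have hbl : ∀ x : Matrix (Fin N) (Fin N) ℂ, (g j)⁻¹ * (g j * x) = x := fun x => by
    rw [← mul_assoc, hb2, one_mul]
  have hbr : ∀ x : Matrix (Fin N) (Fin N) ℂ, g j * ((g j)⁻¹ * x) = x := fun x => by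
    rw [← mul_assoc, hb1, one_mul]
  have keyl : ∀ i : Fin n, ∀ x : Matrix (Fin N) (Fin N) ℂ,
      (g ↑i)ᴴ * (H * x) = H * ((g ↑i)⁻¹ * x) := fun i x => by
    rw [← mul_assoc, key ↑i i.isLt, mul_assoc]
  have keyj : ∀ x : Matrix (Fin N) (Fin N) ℂ,
      (g j)ᴴ * (H * x) = H * ((g j)⁻¹ * x) := fun x => by
    rw [← mul_assoc, key j hj, mul_assoc]
  have hstar : star mu = mu⁻¹ := hconj
  rcases Nat.lt_trichotomy (p : ℕ) j with hp | hp | hp <;>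
    rcases Nat.lt_trichotomy (q : ℕ) j with hq | hq | hq
  · have hp1 : ¬ ((p:ℕ) = j) := by omega
    have hp1' : ¬ (j = (p:ℕ)) := by omega
    have hp2 : ¬ (j < (p:ℕ)) := by omega
    have hq1 : ¬ ((q:ℕ) = j) := by omega
    have hq1' : ¬ (j = (q:ℕ)) := by omega
    have hq2 : ¬ (j < (q:ℕ)) := by omega
    simp only [hp, hq, hp1, hp1', hp2, hq1, hq1', hq2, lt_self_iff_false, if_true, if_false, ite_true, ite_false]
    simp only [conjTranspose_smul, conjTranspose_sub, conjTranspose_one, map_pow, hconj,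
      smul_smul, smul_mul_assoc, mul_smul_comm, sub_mul, mul_sub, add_mul, mul_add,
      star_pow, hstar, mul_assoc,
      keyl, keyj, key j hj, key ↑p p.isLt, key ↑q q.isLt, hbl, hbr, hb1, hb2,
      one_mul, mul_one, smul_sub, sub_smul, zero_add, add_zero]
    match_scalars
    any_goals ring
    all_goals field_simp
    all_goals ring
  · have hp1 : ¬ ((p:ℕ) = j) := by omega
    have hp1' : ¬ (j = (p:ℕ)) := by omega
    have hp2 : ¬ (j < (p:ℕ)) := by omega
    simp only [hp, hq, hp1, hp1', hp2, lt_self_iff_false, if_true, if_false, ite_true, ite_false]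
    simp only [conjTranspose_smul, conjTranspose_sub, conjTranspose_one, map_pow, hconj,
      smul_smul, smul_mul_assoc, mul_smul_comm, sub_mul, mul_sub, add_mul, mul_add,
      star_pow, hstar, mul_assoc,
      keyl, keyj, key j hj, key ↑p p.isLt, key ↑q q.isLt, hbl, hbr, hb1, hb2,
      one_mul, mul_one, smul_sub, sub_smul, zero_add, add_zero]
    match_scalars
    any_goals ring
    all_goals field_simp
    all_goals ring
  · have hp1 : ¬ ((p:ℕ) = j) := by omega
    have hp1' : ¬ (j = (p:ℕ)) := by omega
    have hp2 : ¬ (j < (p:ℕ)) := by omega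
    have hq1 : ¬ ((q:ℕ) = j) := by omega
    have hq1' : ¬ (j = (q:ℕ)) := by omega
    have hq2 : ¬ ((q:ℕ) < j) := by omega
    simp only [hp, hq, hp1, hp1', hp2, hq1, hq1', hq2, lt_self_iff_false, if_true, if_false, ite_true, ite_false]
    simp only [conjTranspose_smul, conjTranspose_sub, conjTranspose_one, map_pow, hconj,
      smul_smul, smul_mul_assoc, mul_smul_comm, sub_mul, mul_sub, add_mul, mul_add,
      star_pow, hstar, mul_assoc,
      keyl, keyj, key j hj, key ↑p p.isLt, key ↑q q.isLt, hbl, hbr, hb1, hb2,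
      one_mul, mul_one, smul_sub, sub_smul, zero_add, add_zero]
    match_scalars
    any_goals ring
    all_goals field_simp
    all_goals ring
  · have hq1 : ¬ ((q:ℕ) = j) := by omega
    have hq1' : ¬ (j = (q:ℕ)) := by omega
    have hq2 : ¬ (j < (q:ℕ)) := by omega
    simp only [hp, hq, hq1, hq1', hq2, lt_self_iff_false, if_true, if_false, ite_true, ite_false]
    simp only [conjTranspose_smul, conjTranspose_sub, conjTranspose_one, map_pow, hconj,
      smul_smul, smul_mul_assoc, mul_smul_comm, sub_mul, mul_sub, add_mul, mul_add,
      star_pow, hstar, mul_assoc,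
      keyl, keyj, key j hj, key ↑p p.isLt, key ↑q q.isLt, hbl, hbr, hb1, hb2,
      one_mul, mul_one, smul_sub, sub_smul, zero_add, add_zero]
    match_scalars
    any_goals ring
    all_goals field_simp
    all_goals ring
  · simp only [hp, hq, lt_self_iff_false, if_true, if_false, ite_true, ite_false]
    simp only [conjTranspose_smul, conjTranspose_sub, conjTranspose_one, map_pow, hconj,
      smul_smul, smul_mul_assoc, mul_smul_comm, sub_mul, mul_sub, add_mul, mul_add,
      star_pow, hstar, mul_assoc,
      keyl, keyj, key j hj, key ↑p p.isLt, key ↑q q.isLt, hbl, hbr, hb1, hb2,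
      one_mul, mul_one, smul_sub, sub_smul, zero_add, add_zero]
    match_scalars
    any_goals ring
    all_goals field_simp
    all_goals ring
  · have hq1 : ¬ ((q:ℕ) = j) := by omega
    have hq1' : ¬ (j = (q:ℕ)) := by omega
    have hq2 : ¬ ((q:ℕ) < j) := by omega
    simp only [hp, hq, hq1, hq1', hq2, lt_self_iff_false, if_true, if_false, ite_true, ite_false]
    simp only [conjTranspose_smul, conjTranspose_sub, conjTranspose_one, map_pow, hconj,
      smul_smul, smul_mul_assoc, mul_smul_comm, sub_mul, mul_sub, add_mul, mul_add,
      star_pow, hstar, mul_assoc,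
      keyl, keyj, key j hj, key ↑p p.isLt, key ↑q q.isLt, hbl, hbr, hb1, hb2,
      one_mul, mul_one, smul_sub, sub_smul, zero_add, add_zero]
    match_scalars
    any_goals ring
    all_goals field_simp
    all_goals ring
  · have hp1 : ¬ ((p:ℕ) = j) := by omega
    have hp1' : ¬ (j = (p:ℕ)) := by omega
    have hp2 : ¬ ((p:ℕ) < j) := by omega
    have hq1 : ¬ ((q:ℕ) = j) := by omega
    have hq1' : ¬ (j = (q:ℕ)) := by omega
    have hq2 : ¬ (j < (q:ℕ)) := by omega
    simp only [hp, hq, hp1, hp1', hp2, hq1, hq1', hq2, lt_self_iff_false, if_true, if_false, ite_true, ite_false]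
    simp only [conjTranspose_smul, conjTranspose_sub, conjTranspose_one, map_pow, hconj,
      smul_smul, smul_mul_assoc, mul_smul_comm, sub_mul, mul_sub, add_mul, mul_add,
      star_pow, hstar, mul_assoc,
      keyl, keyj, key j hj, key ↑p p.isLt, key ↑q q.isLt, hbl, hbr, hb1, hb2,
      one_mul, mul_one, smul_sub, sub_smul, zero_add, add_zero]
    match_scalars
    any_goals ring
    all_goals field_simp
    all_goals ring
  · have hp1 : ¬ ((p:ℕ) = j) := by omega
    have hp1' : ¬ (j = (p:ℕ)) := by omega
    have hp2 : ¬ ((p:ℕ) < j) := by omega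
    simp only [hp, hq, hp1, hp1', hp2, lt_self_iff_false, if_true, if_false, ite_true, ite_false]
    simp only [conjTranspose_smul, conjTranspose_sub, conjTranspose_one, map_pow, hconj,
      smul_smul, smul_mul_assoc, mul_smul_comm, sub_mul, mul_sub, add_mul, mul_add,
      star_pow, hstar, mul_assoc,
      keyl, keyj, key j hj, key ↑p p.isLt, key ↑q q.isLt, hbl, hbr, hb1, hb2,
      one_mul, mul_one, smul_sub, sub_smul, zero_add, add_zero]
    match_scalars
    any_goals ring
    all_goals field_simp
    all_goals ring
  · have hp1 : ¬ ((p:ℕ) = j) := by omega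
    have hp1' : ¬ (j = (p:ℕ)) := by omega
    have hp2 : ¬ ((p:ℕ) < j) := by omega
    have hq1 : ¬ ((q:ℕ) = j) := by omega
    have hq1' : ¬ (j = (q:ℕ)) := by omega
    have hq2 : ¬ ((q:ℕ) < j) := by omega
    simp only [hp, hq, hp1, hp1', hp2, hq1, hq1', hq2, lt_self_iff_false, if_true, if_false, ite_true, ite_false]
    simp only [conjTranspose_smul, conjTranspose_sub, conjTranspose_one, map_pow, hconj,
      smul_smul, smul_mul_assoc, mul_smul_comm, sub_mul, mul_sub, add_mul, mul_add,
      star_pow, hstar, mul_assoc,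
      keyl, keyj, key j hj, key ↑p p.isLt, key ↑q q.isLt, hbl, hbr, hb1, hb2,
      one_mul, mul_one, smul_sub, sub_smul, zero_add, add_zero]
    match_scalars
    any_goals ring
    all_goals field_simp
    all_goals ring

end KLM
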